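/- (May's Theorem) A two-alternative social choice function F : {-1,0,1}^n -> {-1,0,1} equals the sign of the sum of votes (simple majority rule) if and only if F is egalitarian (invariant under permutation of voters), strongly neutral (F(-D) = -F(D) for all D), and strongly monotonic (D >= D' componentwise implies F(D) >= F(D'), and if additionally D > D' in some component with F(D') = 0 then F(D) = 1). -/

import Mathlib

/-- A ballot profile assigns each of the `n` voters a vote in {-1, 0, 1}. -/
abbrev Profile (n : ℕ) := Fin n → SignType

/-- Simple majority rule: the sign of the sum of the votes. -/
noncomputable def simpleMajority {n : ℕ} (D : Profile n) : SignType :=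
  SignType.sign (∑ i, (D i : ℤ))

/-- `F` is egalitarian: invariant under permutations of the voters. -/
def Egalitarian {n : ℕ} (F : Profile n → SignType) : Prop :=
  ∀ (σ : Equiv.Perm (Fin n)) (D : Profile n), F (D ∘ σ) = F D

/-- `F` is strongly neutral: `F (-D) = -F D`. -/
def StronglyNeutral {n : ℕ} (F : Profile n → SignType) : Prop :=
  ∀ D : Profile n, F (fun i => -D i) = -F D

/-- `F` is strongly monotonic: it is monotone componentwise, and raising some
vote strictly from a profile with outcome 0 yields outcome 1. -/
def StronglyMonotonic {n : ℕ} (F : Profile n → SignType) : Prop :=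
  (∀ D D' : Profile n, (∀ i, D' i ≤ D i) → F D' ≤ F D) ∧
  (∀ D D' : Profile n, (∀ i, D' i ≤ D i) → (∃ i, D' i < D i) → F D' = 0 → F D = 1)

/-!
If the votes of `D` sum to zero, then `D` has as many `1`s as `-1`s, so `-D` is a permutation of
`D`; egalitarianism and neutrality then give `F D = -F D`, i.e. `F D = 0`. If the sum is positive,
lowering one `1` vote to `0` decreases it by one, so by induction on the sum, strong monotonicity
yields `F D = 1`. Neutrality reduces negative sums to positive ones.
-/

open Finset

theorem exists_perm_comp_eq_of_card_fiber_eq {α β : Type*} [Fintype α] [DecidableEq β]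
    {f g : α → β} (h : ∀ b, Fintype.card {a // f a = b} = Fintype.card {a // g a = b}) :
    ∃ σ : Equiv.Perm α, g ∘ σ = f :=
  ⟨Equiv.ofFiberEquiv fun b => Fintype.equivOfCardEq (h b),
    funext (Equiv.ofFiberEquiv_map _)⟩

theorem SignType.strictMono_coe_int : StrictMono (fun s : SignType => (s : ℤ)) := by
  decide

namespace Profile

variable {n : ℕ}

theorem sum_neg (D : Profile n) : ∑ i, ((-D i : SignType) : ℤ) = -∑ i, (D i : ℤ) := by
  simp only [SignType.coe_neg, sum_neg_distrib]

theorem sum_eq_card_sub_card (D : Profile n) :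
    ∑ i, (D i : ℤ) = #{i | D i = 1} - #{i | D i = -1} := by
  have h : ∀ i, (D i : ℤ) = (if D i = 1 then 1 else 0) - (if D i = -1 then 1 else 0) := by
    intro i; cases D i <;> simp
  simp only [h, sum_sub_distrib, sum_boole]

theorem exists_perm_comp_eq_neg (D : Profile n) (h : ∑ i, (D i : ℤ) = 0) :
    ∃ σ : Equiv.Perm (Fin n), D ∘ σ = fun i => -D i := by
  have hcard : #{i | D i = 1} = #{i | D i = -1} := by
    have := sum_eq_card_sub_card D; omega
  apply exists_perm_comp_eq_of_card_fiber_eq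
  intro b
  simp only [neg_eq_iff_eq_neg, Fintype.card_subtype]
  rcases b with _ | _ | _ <;> simp [hcard]

theorem exists_eq_one_of_sum_pos (D : Profile n) (h : 0 < ∑ i, (D i : ℤ)) : ∃ i, D i = 1 := by
  obtain ⟨i, -, hi⟩ := exists_lt_of_sum_lt (s := univ) (f := fun _ => (0 : ℤ))
    (g := fun i => (D i : ℤ)) (by simpa using h)
  exact ⟨i, by cases hD : D i <;> simp_all⟩

theorem sum_update_zero (D : Profile n) (i : Fin n) :
    ∑ j, (Function.update D i 0 j : ℤ) = ∑ j, (D j : ℤ) - D i := by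
  rw [← Finset.add_sum_erase _ _ (mem_univ i), ← Finset.add_sum_erase _ _ (mem_univ i)]
  rw [Finset.sum_congr rfl fun j hj => by rw [Function.update_of_ne (ne_of_mem_erase hj)]]
  simp

theorem exists_lt_sum_eq_sub_one (D : Profile n) (h : 0 < ∑ i, (D i : ℤ)) :
    ∃ D' < D, ∑ i, (D' i : ℤ) = ∑ i, (D i : ℤ) - 1 := by
  obtain ⟨i, hi⟩ := D.exists_eq_one_of_sum_pos h
  refine ⟨Function.update D i 0, Pi.lt_def.2 ⟨fun j => ?_, i, by simp [hi]⟩, by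
    rw [sum_update_zero, hi, SignType.coe_one]⟩
  rcases eq_or_ne j i with rfl | hj
  · simp [hi]
  · simp [hj]

end Profile

section

variable {n : ℕ}

theorem egalitarian_simpleMajority : Egalitarian (simpleMajority (n := n)) := fun σ D => by
  simp only [simpleMajority, Function.comp_apply, Equiv.sum_comp σ fun i => (D i : ℤ)]

theorem stronglyNeutral_simpleMajority : StronglyNeutral (simpleMajority (n := n)) := fun D => by
  simp only [simpleMajority, D.sum_neg, Left.sign_neg]

theorem stronglyMonotonic_simpleMajority : StronglyMonotonic (simpleMajority (n := n)) := by
  have hcoe := SignType.strictMono_coe_int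
  refine ⟨fun D D' hle => SignType.sign.monotone (sum_le_sum fun i _ => hcoe.monotone (hle i)),
    fun D D' hle ⟨i, hi⟩ h0 => sign_pos ?_⟩
  rw [simpleMajority, sign_eq_zero_iff] at h0
  calc 0 = ∑ j, (D' j : ℤ) := h0.symm
    _ < ∑ j, (D j : ℤ) := sum_lt_sum (fun j _ => hcoe.monotone (hle j)) ⟨i, mem_univ i, hcoe hi⟩

variable {F : Profile n → SignType}

theorem Egalitarian.apply_eq_zero_of_sum_eq_zero (hE : Egalitarian F) (hN : StronglyNeutral F)
    {D : Profile n} (h : ∑ i, (D i : ℤ) = 0) : F D = 0 := by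
  obtain ⟨σ, hσ⟩ := D.exists_perm_comp_eq_neg h
  rw [← SignType.self_eq_neg_iff, ← hN, ← hσ, hE]

theorem StronglyMonotonic.apply_eq_one_of_lt (hM : StronglyMonotonic F) {D D' : Profile n}
    (hlt : D' < D) (h : 0 ≤ F D') : F D = 1 := by
  obtain ⟨hle, hlt⟩ := Pi.lt_def.1 hlt
  rcases SignType.nonneg_iff.1 h with h0 | h1
  · exact hM.2 D D' hle hlt h0
  · exact SignType.one_le_iff.1 (h1 ▸ hM.1 D D' hle)

theorem apply_eq_one_of_sum_pos (hE : Egalitarian F) (hN : StronglyNeutral F)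
    (hM : StronglyMonotonic F) {D : Profile n} (h : 0 < ∑ i, (D i : ℤ)) : F D = 1 := by
  obtain ⟨k, hk, hD⟩ : ∃ k : ℤ, 1 ≤ k ∧ ∑ i, (D i : ℤ) = k := ⟨_, h, rfl⟩
  induction k, hk using Int.leInduction generalizing D with
  | base =>
    obtain ⟨D', hlt, hsum⟩ := D.exists_lt_sum_eq_sub_one h
    exact hM.apply_eq_one_of_lt hlt (hE.apply_eq_zero_of_sum_eq_zero hN (by omega)).ge
  | succ k hk ih =>
    obtain ⟨D', hlt, hsum⟩ := D.exists_lt_sum_eq_sub_one h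
    exact hM.apply_eq_one_of_lt hlt (SignType.nonneg_iff.2 (.inr (ih (by omega) (by omega))))

theorem eq_simpleMajority (hE : Egalitarian F) (hN : StronglyNeutral F)
    (hM : StronglyMonotonic F) : F = simpleMajority := by
  funext D
  rcases lt_trichotomy (∑ i, (D i : ℤ)) 0 with hneg | hzero | hpos
  · have h := apply_eq_one_of_sum_pos hE hN hM (D := fun i => -D i) (by rw [D.sum_neg]; omega)
    rw [simpleMajority, sign_neg hneg, ← neg_neg (F D), ← hN, h]
  · rw [simpleMajority, hzero, sign_zero, hE.apply_eq_zero_of_sum_eq_zero hN hzero]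
  · rw [simpleMajority, sign_pos hpos, apply_eq_one_of_sum_pos hE hN hM hpos]

end

/-- (May's Theorem) A two-alternative social choice function is simple majority
rule iff it is egalitarian, strongly neutral and strongly monotonic. -/
theorem mays_theorem {n : ℕ} (F : Profile n → SignType) :
    F = simpleMajority ↔
      Egalitarian F ∧ StronglyNeutral F ∧ StronglyMonotonic F := by
  constructor
  · rintro rfl
    exact ⟨egalitarian_simpleMajority, stronglyNeutral_simpleMajority,
      stronglyMonotonic_simpleMajority⟩
  · rintro ⟨hE, hN, hM⟩
    exact eq_simpleMajority hE hN hM
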